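/- arXiv:1410.5750 — 2 statements merged into one kernel-verified Lean document; each statement's English description precedes it below -/
import Mathlib

section
/- If H is a graph in which every vertex degree is divisible by r, then there is an r-regular graph H_0 such that H can be obtained from H_0 by identifying vertices (equivalently, there is an edge-bijective graph homomorphism from H_0 to H). -/
open SimpleGraph

namespace Paper

variable {V W : Type*}

/-- The copy of `F` inside a graph on vertex set `V` given by an injective map `φ`. -/
def copyAt (F : SimpleGraph W) (φ : W ↪ V) : SimpleGraph V where
  Adj x y := ∃ a b, F.Adj a b ∧ φ a = x ∧ φ b = y
  symm := by constructor; rintro x y ⟨a, b, h, rfl, rfl⟩; exact ⟨b, a, h.symm, rfl, rfl⟩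
  loopless := by
    constructor
    rintro x ⟨a, b, h, rfl, hb⟩
    exact F.loopless.irrefl a ((φ.injective hb) ▸ h)

/-- `s` is an `F`-decomposition of `G`: a family of copies of `F` in `G`, pairwise
edge-disjoint, whose edge sets cover every edge of `G`. -/
def IsDecompositionOn (F : SimpleGraph W) (G : SimpleGraph V) (s : Set (W ↪ V)) : Prop :=
  (∀ φ ∈ s, copyAt F φ ≤ G) ∧
  (∀ e ∈ G.edgeSet, ∃ φ ∈ s, e ∈ (copyAt F φ).edgeSet) ∧
  s.Pairwise fun φ ψ => Disjoint (copyAt F φ).edgeSet (copyAt F ψ).edgeSet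

/-- `G` has an `F`-decomposition: its edge set can be partitioned into copies of `F`. -/
def HasDecomposition (F : SimpleGraph W) (G : SimpleGraph V) : Prop :=
  ∃ s : Set (W ↪ V), IsDecompositionOn F G s

/-- The number of edges of a graph. -/
noncomputable def ecard (G : SimpleGraph V) : ℕ := Nat.card G.edgeSet

/-- The degree of a vertex. -/
noncomputable def ndeg (G : SimpleGraph V) (v : V) : ℕ := Nat.card (G.neighborSet v)

/-!
Split every vertex `v` of `H` into `deg v / r` copies and distribute the edges at `v` among
the copies, `r` to each. The projection of the resulting `r`-regular graph onto `H` maps its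
edges bijectively onto those of `H`, since each edge of `H` is attached to exactly one copy
of each of its ends.
-/

section Split

variable {α : V → Type*} (H : SimpleGraph V) (b : ∀ v, H.neighborSet v → α v)

def splitGraph : SimpleGraph (Σ v, α v) where
  Adj x y := ∃ h : H.Adj x.1 y.1, b x.1 ⟨y.1, h⟩ = x.2 ∧ b y.1 ⟨x.1, h.symm⟩ = y.2
  symm := ⟨fun _ _ ⟨h, hx, hy⟩ => ⟨h.symm, hy, hx⟩⟩
  loopless := ⟨fun x ⟨h, _⟩ => H.loopless.irrefl x.1 h⟩

def splitGraph.proj : splitGraph H b →g H where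
  toFun := Sigma.fst
  map_rel' h := h.fst

def neighborSetSplitGraphEquiv (v : V) (i : α v) :
    (splitGraph H b).neighborSet ⟨v, i⟩ ≃ {w : H.neighborSet v // b v w = i} where
  toFun y := ⟨⟨y.1.1, y.2.1⟩, y.2.2.1⟩
  invFun w := ⟨⟨w.1.1, b w.1.1 ⟨v, w.1.2.symm⟩⟩, w.1.2, w.2, rfl⟩
  left_inv y := Subtype.ext (Sigma.ext rfl (heq_of_eq y.2.2.2))
  right_inv _ := rfl

theorem ndeg_splitGraph (v : V) (i : α v) :
    ndeg (splitGraph H b) ⟨v, i⟩ = Nat.card {w : H.neighborSet v // b v w = i} :=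
  Nat.card_congr (neighborSetSplitGraphEquiv H b v i)

variable {H b} in
theorem eq_of_splitGraph_adj {x y x' y' : Σ v, α v} (h : (splitGraph H b).Adj x y)
    (h' : (splitGraph H b).Adj x' y') (hx : x.1 = x'.1) (hy : y.1 = y'.1) : x = x' := by
  obtain ⟨u, i⟩ := x
  obtain ⟨u', i'⟩ := x'
  obtain rfl : u = u' := hx
  refine Sigma.ext rfl (heq_of_eq ?_)
  calc i = b u ⟨y.1, h.fst⟩ := h.snd.1.symm
    _ = b u ⟨y'.1, h'.fst⟩ := congrArg (b u) (Subtype.ext hy)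
    _ = i' := h'.snd.1

theorem bijective_mapEdgeSet_splitGraph_proj :
    Function.Bijective (splitGraph.proj H b).mapEdgeSet := by
  constructor
  · rintro ⟨e, he⟩ ⟨e', he'⟩ h
    induction e using Sym2.ind with | h x y =>
    induction e' using Sym2.ind with | h x' y' =>
    rw [mem_edgeSet] at he he'
    simp only [Hom.mapEdgeSet, Subtype.mk.injEq, Sym2.map_mk, Sym2.eq_iff] at h
    rw [Subtype.mk.injEq, Sym2.eq_iff]
    rcases h with ⟨hx, hy⟩ | ⟨hx, hy⟩
    · exact .inl ⟨eq_of_splitGraph_adj he he' hx hy, eq_of_splitGraph_adj he.symm he'.symm hy hx⟩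
    · exact .inr ⟨eq_of_splitGraph_adj he he'.symm hx hy, eq_of_splitGraph_adj he.symm he' hy hx⟩
  · rintro ⟨e, he⟩
    induction e using Sym2.ind with | h u v =>
    rw [mem_edgeSet] at he
    exact ⟨⟨s(⟨u, b u ⟨v, he⟩⟩, ⟨v, b v ⟨u, he.symm⟩⟩), he, rfl, rfl⟩, rfl⟩

end Split

theorem exists_fiber_card_eq {X : Type*} [Finite X] {r : ℕ} (hr : r ∣ Nat.card X) :
    ∃ f : X → Fin (Nat.card X / r), ∀ i, Nat.card {x // f x = i} = r := by
  let e : X ≃ Fin (Nat.card X / r) × Fin r :=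
    (Finite.equivFin X).trans ((finCongr (Nat.div_mul_cancel hr).symm).trans finProdFinEquiv.symm)
  refine ⟨fun x => (e x).1, fun i => ?_⟩
  calc Nat.card {x // (e x).1 = i}
      = Nat.card ({j // j = i} × Fin r) :=
        Nat.card_congr ((e.subtypeEquiv fun _ => Iff.rfl).trans
          (Equiv.prodSubtypeFstEquivSubtypeProd (p := (· = i))))
    _ = r := by simp

/-- If every vertex degree of a (finite) graph `H` is divisible by `r`, then there is an
`r`-regular graph `H₀` from which `H` can be obtained by identifying vertices;
equivalently, there is an edge-bijective graph homomorphism `H₀ → H`. -/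
theorem exists_regular_with_edge_bijective_hom {V : Type} [Fintype V]
    (H : SimpleGraph V) (r : ℕ) (hdiv : ∀ v, r ∣ ndeg H v) :
    ∃ (V₀ : Type) (_ : Fintype V₀) (H₀ : SimpleGraph V₀),
      (∀ v, ndeg H₀ v = r) ∧
      ∃ φ : H₀ →g H, Function.Bijective φ.mapEdgeSet := by
  choose b hb using fun v => exists_fiber_card_eq (hdiv v)
  exact ⟨_, inferInstance, splitGraph H b, fun ⟨v, i⟩ => (ndeg_splitGraph H b v i).trans (hb v i),
    splitGraph.proj H b, bijective_mapEdgeSet_splitGraph_proj H b⟩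

end Paper
end

section
/- Let H be an r-regular graph that is a vertex-disjoint union of cycles (case r = 2). If for every cycle C in H and every edge-bijective homomorphic image C' of C there exists a (C, C')_{C_3}-transformer of degeneracy at most 4 rooted at V(C ∪ C'), then for every graph H' obtained from H by identifying vertices (with H, H' vertex-disjoint) there exists an (H, H')_{C_3}-transformer T whose degeneracy rooted at V(H ∪ H') is at most 4. -/
/-!
Split `H` into the connected component `C` of one vertex (a cycle, by 2-regularity) and the
rest `K`; `φ` maps them onto edge-disjoint graphs `C'` and `K'` with `H' = C' ∪ K'`, so it
suffices, by induction on `|V(H)|`, to glue transformers for `(C, C')` and `(K, K')`. Choose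
them finite and such that the non-root vertices of each avoid everything of the other piece.
Then the union of the two transformers has no edges inside the roots and is edge-disjoint
from the other piece, so the two triangle decompositions combine; and listing all roots
first, followed by the non-root vertices of each transformer in its own order, keeps every
back-degree at most `4`, because a non-root vertex has neighbours in one transformer only.
-/

open SimpleGraph

namespace Paper

variable {V W : Type*}

/-- `T` is an `(H, H')_F`-transformer: `T` is edge-disjoint from `H` and `H'`,
`V(H ∪ H') ⊆ V(T)`, `T` has no edges inside `V(H ∪ H')`, and both `T ∪ H` and
`T ∪ H'` have `F`-decompositions. -/
def IsTransformer {V W : Type*} (F : SimpleGraph W) (H H' T : SimpleGraph V) : Prop :=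
  Disjoint H.edgeSet T.edgeSet ∧ Disjoint H'.edgeSet T.edgeSet ∧
  H.support ∪ H'.support ⊆ T.support ∧
  (∀ x ∈ H.support ∪ H'.support, ∀ y ∈ H.support ∪ H'.support, ¬ T.Adj x y) ∧
  HasDecomposition F (T ⊔ H) ∧ HasDecomposition F (T ⊔ H')

/-- The number of neighbours of `v` in `G` lying inside the set `A`. -/
noncomputable def ndegIn (G : SimpleGraph V) (v : V) (A : Set V) : ℕ :=
  Nat.card ↥(G.neighborSet v ∩ A)

/-- The degeneracy of `S` rooted at `R` is at most `d`: there is an ordering of the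
vertices starting with the vertices of `R` in which every vertex outside `R` has at
most `d` earlier neighbours. -/
def DegeneracyRootedLE (S : SimpleGraph V) (R : Set V) (d : ℕ) : Prop :=
  ∃ ord : V → ℕ,
    Set.InjOn ord (S.support ∪ R) ∧
    (∀ x ∈ R, ∀ y ∈ (S.support ∪ R) \ R, ord x < ord y) ∧
    ∀ y ∈ (S.support ∪ R) \ R,
      Nat.card ↥{z | z ∈ S.neighborSet y ∧ ord z < ord y} ≤ d

/-- `C` is a cycle graph: its support is nonempty, every vertex of its support has
degree `2`, and any two vertices of its support are connected in `C`. -/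
def IsCycleGraph (C : SimpleGraph V) : Prop :=
  C.support.Nonempty ∧ (∀ v ∈ C.support, ndeg C v = 2) ∧
  ∀ v ∈ C.support, ∀ w ∈ C.support, C.Reachable v w

lemma support_sup (G₁ G₂ : SimpleGraph V) : (G₁ ⊔ G₂).support = G₁.support ∪ G₂.support := by
  ext x
  simp only [mem_support, sup_adj, exists_or, Set.mem_union]

lemma disjoint_of_support_inter_subset {G T : SimpleGraph V} {R : Set V}
    (hGT : G.support ∩ T.support ⊆ R) (hT : ∀ x ∈ R, ∀ y ∈ R, ¬ T.Adj x y) : Disjoint G T := by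
  rw [← disjoint_edgeSet, Set.disjoint_left, Sym2.forall]
  intro x y hG hT'
  exact hT x (hGT ⟨⟨y, hG⟩, y, hT'⟩) y (hGT ⟨⟨x, hG.symm⟩, x, hT'.symm⟩) hT'

section Decomposition

variable {F : SimpleGraph W}

lemma hasDecomposition_bot (F : SimpleGraph W) : HasDecomposition F (⊥ : SimpleGraph V) :=
  ⟨∅, by simp, by simp, Set.pairwise_empty _⟩

lemma HasDecomposition.sup {G₁ G₂ : SimpleGraph V} (h₁ : HasDecomposition F G₁)
    (h₂ : HasDecomposition F G₂) (hG : Disjoint G₁ G₂) : HasDecomposition F (G₁ ⊔ G₂) := by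
  obtain ⟨s₁, hle₁, hcover₁, hdisj₁⟩ := h₁
  obtain ⟨s₂, hle₂, hcover₂, hdisj₂⟩ := h₂
  have hcross : ∀ φ ∈ s₁, ∀ ψ ∈ s₂, Disjoint (copyAt F φ).edgeSet (copyAt F ψ).edgeSet :=
    fun φ hφ ψ hψ => disjoint_edgeSet.2 (hG.mono (hle₁ φ hφ) (hle₂ ψ hψ))
  refine ⟨s₁ ∪ s₂, ?_, ?_, ?_⟩
  · rintro φ (hφ | hφ)
    · exact (hle₁ φ hφ).trans le_sup_left
    · exact (hle₂ φ hφ).trans le_sup_right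
  · intro e he
    rw [edgeSet_sup] at he
    rcases he with he | he
    · obtain ⟨φ, hφ, heφ⟩ := hcover₁ e he
      exact ⟨φ, Or.inl hφ, heφ⟩
    · obtain ⟨φ, hφ, heφ⟩ := hcover₂ e he
      exact ⟨φ, Or.inr hφ, heφ⟩
  · rintro φ (hφ | hφ) ψ (hψ | hψ) hne
    · exact hdisj₁ hφ hψ hne
    · exact hcross φ hφ ψ hψ
    · exact (hcross ψ hψ φ hφ).symm
    · exact hdisj₂ hφ hψ hne

end Decomposition

theorem IsTransformer.sup {F : SimpleGraph W} {H₁ H₁' T₁ H₂ H₂' T₂ : SimpleGraph V}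
    (h₁ : IsTransformer F H₁ H₁' T₁) (h₂ : IsTransformer F H₂ H₂' T₂)
    (hsep₁ : T₁.support ∩ (T₂.support ∪ (H₂.support ∪ H₂'.support)) ⊆
      H₁.support ∪ H₁'.support)
    (hsep₂ : T₂.support ∩ (H₁.support ∪ H₁'.support) ⊆ H₂.support ∪ H₂'.support)
    (hH : Disjoint H₁ H₂) (hH' : Disjoint H₁' H₂') :
    IsTransformer F (H₁ ⊔ H₂) (H₁' ⊔ H₂') (T₁ ⊔ T₂) := by
  obtain ⟨hH₁, hH₁', hsupp₁, hno₁, hdec₁, hdec₁'⟩ := h₁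
  obtain ⟨hH₂, hH₂', hsupp₂, hno₂, hdec₂, hdec₂'⟩ := h₂
  rw [disjoint_edgeSet] at hH₁ hH₁' hH₂ hH₂'
  set R₁ := H₁.support ∪ H₁'.support
  set R₂ := H₂.support ∪ H₂'.support
  have hR : (H₁ ⊔ H₂).support ∪ (H₁' ⊔ H₂').support = R₁ ∪ R₂ := by
    rw [support_sup, support_sup, Set.union_union_union_comm]
  have hroot₁ : ∀ x ∈ T₁.support, x ∈ R₁ ∪ R₂ → x ∈ R₁ := fun x hx hxR =>
    hxR.elim id fun hx₂ => hsep₁ ⟨hx, Or.inr hx₂⟩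
  have hroot₂ : ∀ x ∈ T₂.support, x ∈ R₁ ∪ R₂ → x ∈ R₂ := fun x hx hxR =>
    hxR.elim (fun hx₁ => hsep₂ ⟨hx, hx₁⟩) id
  have hT₂T₁ : Disjoint T₂ T₁ :=
    disjoint_of_support_inter_subset (fun x hx => hsep₁ ⟨hx.2, Or.inl hx.1⟩) hno₁
  have hT₁ : ∀ {G : SimpleGraph V}, G.support ⊆ R₂ → Disjoint G T₁ := fun hG =>
    disjoint_of_support_inter_subset (fun x hx => hsep₁ ⟨hx.2, Or.inr (hG hx.1)⟩) hno₁
  have hT₂ : ∀ {G : SimpleGraph V}, G.support ⊆ R₁ → Disjoint G T₂ := fun hG =>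
    disjoint_of_support_inter_subset (fun x hx => hsep₂ ⟨hx.2, hG hx.1⟩) hno₂
  refine ⟨?_, ?_, ?_, ?_, ?_, ?_⟩
  · rw [disjoint_edgeSet, disjoint_sup_left, disjoint_sup_right, disjoint_sup_right]
    exact ⟨⟨hH₁, hT₂ Set.subset_union_left⟩, hT₁ Set.subset_union_left, hH₂⟩
  · rw [disjoint_edgeSet, disjoint_sup_left, disjoint_sup_right, disjoint_sup_right]
    exact ⟨⟨hH₁', hT₂ Set.subset_union_right⟩, hT₁ Set.subset_union_right, hH₂'⟩
  · rw [hR, support_sup]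
    exact Set.union_subset_union hsupp₁ hsupp₂
  · rw [hR]
    rintro x hx y hy (hxy | hxy)
    · exact hno₁ x (hroot₁ x ⟨y, hxy⟩ hx) y (hroot₁ y ⟨x, hxy.symm⟩ hy) hxy
    · exact hno₂ x (hroot₂ x ⟨y, hxy⟩ hx) y (hroot₂ y ⟨x, hxy.symm⟩ hy) hxy
  · rw [sup_sup_sup_comm]
    refine hdec₁.sup hdec₂ ?_
    rw [disjoint_sup_left, disjoint_sup_right, disjoint_sup_right]
    exact ⟨⟨hT₂T₁.symm, (hT₁ Set.subset_union_left).symm⟩, hT₂ Set.subset_union_left, hH⟩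
  · rw [sup_sup_sup_comm]
    refine hdec₁'.sup hdec₂' ?_
    rw [disjoint_sup_left, disjoint_sup_right, disjoint_sup_right]
    exact ⟨⟨hT₂T₁.symm, (hT₁ Set.subset_union_right).symm⟩, hT₂ Set.subset_union_right, hH'⟩

lemma support_sup_diff_subset_symmDiff {S₁ S₂ : SimpleGraph V} {R : Set V}
    (hsep : S₁.support ∩ S₂.support ⊆ R) :
    (S₁ ⊔ S₂).support \ R ⊆ symmDiff S₁.support S₂.support := by
  rintro y ⟨hy, hyR⟩
  rw [support_sup] at hy
  rw [Set.mem_symmDiff]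
  rcases hy with hy | hy
  · exact Or.inl ⟨hy, fun h => hyR (hsep ⟨hy, h⟩)⟩
  · exact Or.inr ⟨hy, fun h => hyR (hsep ⟨h, hy⟩)⟩

lemma card_earlier_neighbors_eq {S S' : SimpleGraph V} {ord ord' : V → ℕ} {y : V}
    (hnbr : S.neighborSet y = S'.neighborSet y)
    (hord : ∀ z ∈ S'.neighborSet y, ord z < ord y ↔ ord' z < ord' y) :
    Nat.card ↥{z | z ∈ S.neighborSet y ∧ ord z < ord y} =
      Nat.card ↥{z | z ∈ S'.neighborSet y ∧ ord' z < ord' y} := by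
  rw [hnbr]
  congr 2
  ext z
  exact and_congr_right (hord z)

section GluedOrder

variable (R P : Set V) (r ord₁ ord₂ : V → ℕ) (N : ℕ)

/-- With `r ≤ N` on `R`, the vertices of `R` come first; the others follow, those in `P`
ordered by `ord₂` and those outside by `ord₁`, interleaved by parity so that no bound on
`ord₁`, `ord₂` is needed. -/
noncomputable def gluedOrder (v : V) : ℕ :=
  open Classical in
  if v ∈ R then r v else if v ∈ P then N + 1 + 2 * ord₂ v else N + 2 + 2 * ord₁ v

variable {R P r ord₁ ord₂ N}

lemma gluedOrder_lt_of_mem (hrN : ∀ x ∈ R, r x ≤ N) {x y : V} (hx : x ∈ R) (hy : y ∉ R) :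
    gluedOrder R P r ord₁ ord₂ N x < gluedOrder R P r ord₁ ord₂ N y := by
  have := hrN x hx
  unfold gluedOrder
  split_ifs <;> omega

lemma gluedOrder_lt_iff_of_not_mem {y z : V} (hy : y ∉ R ∪ P) (hz : z ∉ R ∪ P) :
    gluedOrder R P r ord₁ ord₂ N z < gluedOrder R P r ord₁ ord₂ N y ↔ ord₁ z < ord₁ y := by
  simp only [Set.mem_union, not_or] at hy hz
  simp only [gluedOrder, if_neg hy.1, if_neg hy.2, if_neg hz.1, if_neg hz.2]
  omega

lemma gluedOrder_lt_iff_of_mem {y z : V} (hy : y ∈ P \ R) (hz : z ∈ P \ R) :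
    gluedOrder R P r ord₁ ord₂ N z < gluedOrder R P r ord₁ ord₂ N y ↔ ord₂ z < ord₂ y := by
  simp only [gluedOrder, if_neg hy.2, if_pos hy.1, if_neg hz.2, if_pos hz.1]
  omega

lemma gluedOrder_injOn {D₁ D₂ : Set V} (hrN : ∀ x ∈ R, r x ≤ N) (hr : Set.InjOn r R)
    (h₁ : Set.InjOn ord₁ D₁) (h₂ : Set.InjOn ord₂ D₂) :
    Set.InjOn (gluedOrder R P r ord₁ ord₂ N) (R ∪ (D₁ \ P ∪ D₂ ∩ P)) := by
  intro a ha b hb hab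
  by_cases haR : a ∈ R <;> by_cases hbR : b ∈ R
  · exact hr haR hbR (by simpa only [gluedOrder, if_pos haR, if_pos hbR] using hab)
  · exact absurd hab (gluedOrder_lt_of_mem hrN haR hbR).ne
  · exact absurd hab (gluedOrder_lt_of_mem hrN hbR haR).ne'
  · replace ha := ha.resolve_left haR
    replace hb := hb.resolve_left hbR
    simp only [gluedOrder, if_neg haR, if_neg hbR] at hab
    rcases ha with ⟨ha, haP⟩ | ⟨ha, haP⟩ <;> rcases hb with ⟨hb, hbP⟩ | ⟨hb, hbP⟩ <;>
      simp only [haP, hbP, if_true, if_false] at hab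
    · exact h₁ ha hb (by omega)
    · omega
    · omega
    · exact h₂ ha hb (by omega)

end GluedOrder

theorem DegeneracyRootedLE.sup {S₁ S₂ : SimpleGraph V} {R₁ R₂ : Set V} {d : ℕ}
    (h₁ : DegeneracyRootedLE S₁ R₁ d) (h₂ : DegeneracyRootedLE S₂ R₂ d)
    (hR : (R₁ ∪ R₂).Finite)
    (hsep₁ : S₁.support ∩ (S₂.support ∪ R₂) ⊆ R₁) (hsep₂ : S₂.support ∩ R₁ ⊆ R₂) :
    DegeneracyRootedLE (S₁ ⊔ S₂) (R₁ ∪ R₂) d := by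
  obtain ⟨ord₁, hinj₁, hfirst₁, hdeg₁⟩ := h₁
  obtain ⟨ord₂, hinj₂, hfirst₂, hdeg₂⟩ := h₂
  obtain ⟨r, hr⟩ := Set.countable_iff_exists_injOn.1 hR.countable
  obtain ⟨N, hN⟩ := (hR.image r).bddAbove
  have hrN : ∀ x ∈ R₁ ∪ R₂, r x ≤ N := fun x hx => hN ⟨x, hx, rfl⟩
  set R := R₁ ∪ R₂
  set ord := gluedOrder R S₂.support r ord₁ ord₂ N
  have hnew : ∀ y ∈ ((S₁ ⊔ S₂).support ∪ R) \ R,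
      y ∈ symmDiff S₁.support S₂.support ∧ y ∉ R := fun y ⟨hy, hyR⟩ =>
    ⟨support_sup_diff_subset_symmDiff (fun x hx => Or.inl (hsep₁ ⟨hx.1, Or.inl hx.2⟩))
      ⟨hy.resolve_right hyR, hyR⟩, hyR⟩
  refine ⟨ord, ?_, fun x hx y hy => gluedOrder_lt_of_mem hrN hx (hnew y hy).2, ?_⟩
  · refine (gluedOrder_injOn hrN hr hinj₁ hinj₂).mono fun y hy => ?_
    by_cases hyR : y ∈ R
    · exact Or.inl hyR
    · rcases (hnew y ⟨hy, hyR⟩).1 with ⟨hy₁, hy₂⟩ | ⟨hy₂, -⟩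
      · exact Or.inr (Or.inl ⟨Or.inl hy₁, hy₂⟩)
      · exact Or.inr (Or.inr ⟨Or.inl hy₂, hy₂⟩)
  · intro y hy
    obtain ⟨⟨hy₁, hy₂⟩ | ⟨hy₂, hy₁⟩, hyR⟩ := hnew y hy
    · have hyR₁ : y ∉ R₁ := fun h => hyR (Or.inl h)
      refine (card_earlier_neighbors_eq (ord' := ord₁) ?_ fun z hz => ?_).trans_le
        (hdeg₁ y ⟨Or.inl hy₁, hyR₁⟩)
      · ext z
        exact or_iff_left fun h => hy₂ ⟨z, h⟩
      have hz₁ : z ∈ S₁.support := ⟨y, hz.symm⟩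
      by_cases hzR : z ∈ R
      · have hzR₁ : z ∈ R₁ := hzR.elim id fun h => hsep₁ ⟨hz₁, Or.inr h⟩
        exact iff_of_true (gluedOrder_lt_of_mem hrN hzR hyR)
          (hfirst₁ z hzR₁ y ⟨Or.inl hy₁, hyR₁⟩)
      · have hz₂ : z ∉ S₂.support := fun h => hzR (Or.inl (hsep₁ ⟨hz₁, Or.inl h⟩))
        exact gluedOrder_lt_iff_of_not_mem (by simp [hyR, hy₂]) (by simp [hzR, hz₂])
    · have hyR₂ : y ∉ R₂ := fun h => hyR (Or.inr h)
      refine (card_earlier_neighbors_eq (ord' := ord₂) ?_ fun z hz => ?_).trans_le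
        (hdeg₂ y ⟨Or.inl hy₂, hyR₂⟩)
      · ext z
        exact or_iff_right fun h => hy₁ ⟨z, h⟩
      have hz₂ : z ∈ S₂.support := ⟨y, hz.symm⟩
      by_cases hzR : z ∈ R
      · have hzR₂ : z ∈ R₂ := hzR.elim (fun h => hsep₂ ⟨hz₂, h⟩) id
        exact iff_of_true (gluedOrder_lt_of_mem hrN hzR hyR)
          (hfirst₂ z hzR₂ y ⟨Or.inl hy₂, hyR₂⟩)
      · exact gluedOrder_lt_iff_of_mem ⟨hy₂, hyR⟩ ⟨hz₂, hzR⟩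

/-- The avoidance clause is what lets transformers for different pieces be glued. -/
def HasAvoidingTransformer (F : SimpleGraph W) (d : ℕ) (H H' : SimpleGraph V) : Prop :=
  ∀ A : Set V, A.Finite → ∃ T : SimpleGraph V,
    IsTransformer F H H' T ∧ DegeneracyRootedLE T (H.support ∪ H'.support) d ∧
    T.support.Finite ∧ Disjoint (T.support \ (H.support ∪ H'.support)) A

namespace HasAvoidingTransformer

variable {F : SimpleGraph W} {d : ℕ}

lemma finite_roots {H H' : SimpleGraph V} (h : HasAvoidingTransformer F d H H') :
    (H.support ∪ H'.support).Finite := by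
  obtain ⟨T, hT, -, hfin, -⟩ := h ∅ Set.finite_empty
  exact hfin.subset hT.2.2.1

lemma bot : HasAvoidingTransformer F d (⊥ : SimpleGraph V) ⊥ := by
  intro A _
  refine ⟨⊥, ⟨by simp, by simp, by simp, by simp, ?_, ?_⟩, ⟨fun _ => 0, by simp⟩, by simp,
    by simp⟩ <;> simpa only [bot_sup_eq] using hasDecomposition_bot F

theorem sup {H₁ H₁' H₂ H₂' : SimpleGraph V}
    (h₁ : HasAvoidingTransformer F d H₁ H₁') (h₂ : HasAvoidingTransformer F d H₂ H₂')
    (hH : Disjoint H₁ H₂) (hH' : Disjoint H₁' H₂') :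
    HasAvoidingTransformer F d (H₁ ⊔ H₂) (H₁' ⊔ H₂') := by
  intro A hA
  set R₁ := H₁.support ∪ H₁'.support
  set R₂ := H₂.support ∪ H₂'.support
  have hR : (H₁ ⊔ H₂).support ∪ (H₁' ⊔ H₂').support = R₁ ∪ R₂ := by
    rw [support_sup, support_sup, Set.union_union_union_comm]
  obtain ⟨T₂, hT₂, hdeg₂, hfin₂, havoid₂⟩ := h₂ (R₁ ∪ A) (h₁.finite_roots.union hA)
  obtain ⟨T₁, hT₁, hdeg₁, hfin₁, havoid₁⟩ :=
    h₁ (T₂.support ∪ R₂ ∪ A) ((hfin₂.union h₂.finite_roots).union hA)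
  have hsep₁ : T₁.support ∩ (T₂.support ∪ R₂) ⊆ R₁ := fun x hx => by
    by_contra hxR
    exact Set.disjoint_left.1 havoid₁ ⟨hx.1, hxR⟩ (Or.inl hx.2)
  have hsep₂ : T₂.support ∩ R₁ ⊆ R₂ := fun x hx => by
    by_contra hxR
    exact Set.disjoint_left.1 havoid₂ ⟨hx.1, hxR⟩ (Or.inl hx.2)
  refine ⟨T₁ ⊔ T₂, hT₁.sup hT₂ hsep₁ hsep₂ hH hH', ?_, ?_, ?_⟩
  · rw [hR]
    exact hdeg₁.sup hdeg₂ (h₁.finite_roots.union h₂.finite_roots) hsep₁ hsep₂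
  · rw [support_sup]
    exact hfin₁.union hfin₂
  · rw [hR, support_sup, Set.disjoint_left]
    rintro x ⟨hx₁ | hx₂, hxR⟩ hxA
    · exact Set.disjoint_left.1 havoid₁ ⟨hx₁, fun h => hxR (Or.inl h)⟩ (Or.inr hxA)
    · exact Set.disjoint_left.1 havoid₂ ⟨hx₂, fun h => hxR (Or.inr h)⟩ (Or.inr hxA)

end HasAvoidingTransformer

lemma map_sup_eq {V' : Type*} (f : V → V') (G₁ G₂ : SimpleGraph V) :
    (G₁ ⊔ G₂).map f = G₁.map f ⊔ G₂.map f := by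
  ext x y
  simp only [map_adj', sup_adj]
  grind

section Image

variable {H H' G G₁ G₂ : SimpleGraph V} (φ : H →g H')

lemma map_le_of_le (hG : G ≤ H) : G.map φ ≤ H' := by
  rintro x y ⟨-, a, b, hab, rfl, rfl⟩
  exact φ.map_adj (hG hab)

lemma map_eq_of_surjective (hφ : Function.Surjective φ.mapEdgeSet) : H.map φ = H' := by
  refine le_antisymm (map_le_of_le φ le_rfl) fun x y hxy => ?_
  obtain ⟨⟨e, he⟩, hmap⟩ := hφ ⟨s(x, y), hxy⟩
  induction e using Sym2.ind with
  | _ a b =>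
    have hmap : s(φ a, φ b) = s(x, y) := congrArg Subtype.val hmap
    rcases Sym2.eq_iff.1 hmap with ⟨rfl, rfl⟩ | ⟨rfl, rfl⟩
    · exact ⟨hxy.ne, a, b, he, rfl, rfl⟩
    · exact ⟨hxy.ne, b, a, (H.mem_edgeSet.1 he).symm, rfl, rfl⟩

lemma eq_of_map_eq_of_injective (hφ : Function.Injective φ.mapEdgeSet) {e₁ e₂ : Sym2 V}
    (he₁ : e₁ ∈ H.edgeSet) (he₂ : e₂ ∈ H.edgeSet) (h : e₁.map φ = e₂.map φ) : e₁ = e₂ :=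
  congrArg Subtype.val (hφ (a₁ := ⟨e₁, he₁⟩) (a₂ := ⟨e₂, he₂⟩) (Subtype.ext h))

lemma disjoint_map_of_injective (hφ : Function.Injective φ.mapEdgeSet) (h₁ : G₁ ≤ H)
    (h₂ : G₂ ≤ H) (hG : Disjoint G₁ G₂) : Disjoint (G₁.map φ) (G₂.map φ) := by
  rw [← disjoint_edgeSet, Set.disjoint_left, Sym2.forall] at hG ⊢
  rintro x y ⟨-, a, b, hab, rfl, rfl⟩ ⟨-, c, d, hcd, hc, hd⟩
  have h : s(a, b) = s(c, d) :=
    eq_of_map_eq_of_injective φ hφ (edgeSet_mono h₁ hab) (edgeSet_mono h₂ hcd) (by simp [hc, hd])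
  exact hG a b hab (h ▸ hcd)

lemma exists_hom_map_bijective (hφ : Function.Injective φ.mapEdgeSet) (hG : G ≤ H) :
    ∃ ψ : G →g G.map φ, Function.Bijective ψ.mapEdgeSet := by
  refine ⟨Hom.map φ G fun hab => (φ.map_adj (hG hab)).ne, fun e₁ e₂ h => ?_, ?_⟩
  · exact Subtype.ext (eq_of_map_eq_of_injective φ hφ (edgeSet_mono hG e₁.2) (edgeSet_mono hG e₂.2)
      (congrArg Subtype.val h))
  · rintro ⟨e, he⟩
    induction e using Sym2.ind with
    | _ x y =>
      obtain ⟨-, a, b, hab, ha, hb⟩ := he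
      exact ⟨⟨s(a, b), hab⟩, Subtype.ext (Sym2.eq_iff.2 (Or.inl ⟨ha, hb⟩))⟩

end Image

def componentGraph (H : SimpleGraph V) (v : V) : SimpleGraph V where
  Adj x y := H.Adj x y ∧ H.Reachable v x
  symm := ⟨fun _ _ h => ⟨h.1.symm, h.2.trans h.1.reachable⟩⟩
  loopless := ⟨fun x h => H.loopless.irrefl x h.1⟩

section Component

variable {H : SimpleGraph V} {v x : V}

@[simp]
lemma componentGraph_adj {y : V} :
    (componentGraph H v).Adj x y ↔ H.Adj x y ∧ H.Reachable v x :=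
  Iff.rfl

lemma componentGraph_le : componentGraph H v ≤ H := fun _ _ h => h.1

lemma neighborSet_componentGraph (hx : H.Reachable v x) :
    (componentGraph H v).neighborSet x = H.neighborSet x :=
  Set.ext fun _ => ⟨And.left, fun h => ⟨h, hx⟩⟩

lemma neighborSet_sdiff_componentGraph (hx : ¬ H.Reachable v x) :
    (H \ componentGraph H v).neighborSet x = H.neighborSet x :=
  Set.ext fun _ => ⟨And.left, fun h => ⟨h, fun h' => hx h'.2⟩⟩

lemma reachable_of_mem_support_componentGraph (hx : x ∈ (componentGraph H v).support) :
    H.Reachable v x :=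
  let ⟨_, _, hvx⟩ := hx
  hvx

lemma not_reachable_of_mem_support_sdiff_componentGraph
    (hx : x ∈ (H \ componentGraph H v).support) : ¬ H.Reachable v x :=
  let ⟨_, hxy, hn⟩ := hx
  fun hvx => hn ⟨hxy, hvx⟩

lemma componentGraph_reachable {w : V} (hx : H.Reachable v x) (p : H.Walk x w) :
    (componentGraph H v).Reachable x w := by
  induction p with
  | nil => rfl
  | cons h _ ih =>
    exact (componentGraph_adj.2 ⟨h, hx⟩).reachable.trans (ih (hx.trans h.reachable))

lemma isCycleGraph_componentGraph (hreg : ∀ x ∈ H.support, ndeg H x = 2)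
    (hv : v ∈ H.support) : IsCycleGraph (componentGraph H v) := by
  refine ⟨?_, fun x hx => ?_, fun x hx w hw => ?_⟩
  · obtain ⟨w, hvw⟩ := hv
    exact ⟨v, w, componentGraph_adj.2 ⟨hvw, Reachable.refl v⟩⟩
  · rw [ndeg, neighborSet_componentGraph (reachable_of_mem_support_componentGraph hx)]
    exact hreg x (support_mono componentGraph_le hx)
  · have hvx := reachable_of_mem_support_componentGraph hx
    obtain ⟨p⟩ := hvx.symm.trans (reachable_of_mem_support_componentGraph hw)
    exact componentGraph_reachable hvx p

lemma support_sdiff_componentGraph_ssubset (hv : v ∈ H.support) :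
    (H \ componentGraph H v).support ⊂ H.support :=
  (Set.ssubset_iff_of_subset (support_mono sdiff_le)).2
    ⟨v, hv, fun h => not_reachable_of_mem_support_sdiff_componentGraph h (Reachable.refl v)⟩

end Component

theorem hasAvoidingTransformer_of_cycles {F : SimpleGraph W} {d : ℕ} {H H' : SimpleGraph V}
    (hreg : ∀ v ∈ H.support, ndeg H v = 2) (hfin : H.support.Finite)
    (hcyc : ∀ C C' : SimpleGraph V, C ≤ H → IsCycleGraph C → Disjoint C.support C'.support →
      (∃ ψ : C →g C', Function.Bijective ψ.mapEdgeSet) → HasAvoidingTransformer F d C C')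
    (hdisj : Disjoint H.support H'.support)
    (φ : H →g H') (hφ : Function.Bijective φ.mapEdgeSet) :
    HasAvoidingTransformer F d H H' := by
  induction hn : H.support.ncard using Nat.strong_induction_on generalizing H H' with
  | _ n ih =>
  rcases H.support.eq_empty_or_nonempty with hH | ⟨v, hv⟩
  · rw [support_eq_bot_iff] at hH
    subst hH
    rw [← map_eq_of_surjective φ hφ.2]
    have hbot : (⊥ : SimpleGraph V).map φ = ⊥ := le_bot_iff.1 fun _ _ ⟨_, _, _, h, _⟩ => h
    rw [hbot]
    exact HasAvoidingTransformer.bot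
  set C := componentGraph H v
  set K := H \ C
  have hCK : C ⊔ K = H := sup_sdiff_cancel_right componentGraph_le
  have hC : C ≤ H := componentGraph_le
  have hK : K ≤ H := sdiff_le
  have hdisj' : ∀ {G}, G ≤ H → Disjoint G.support (G.map φ).support := fun hG =>
    hdisj.mono (support_mono hG) (support_mono (map_le_of_le φ hG))
  have hH' : C.map φ ⊔ K.map φ = H' := by
    rw [← map_sup_eq, hCK, map_eq_of_surjective φ hφ.2]
  rw [← hCK, ← hH']
  refine .sup ?_ ?_ disjoint_sdiff_self_right
    (disjoint_map_of_injective φ hφ.1 hC hK disjoint_sdiff_self_right)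
  · exact hcyc C _ hC (isCycleGraph_componentGraph hreg hv) (hdisj' hC)
      (exists_hom_map_bijective φ hφ.1 hC)
  · obtain ⟨ψ, hψ⟩ := exists_hom_map_bijective φ hφ.1 hK
    refine ih _ (hn ▸ Set.ncard_lt_ncard (support_sdiff_componentGraph_ssubset hv) hfin)
      (fun x hx => ?_) (hfin.subset (support_mono hK)) (fun C C' hC' => hcyc C C' (hC'.trans hK))
      (hdisj' hK) ψ hψ rfl
    rw [ndeg, neighborSet_sdiff_componentGraph
      (not_reachable_of_mem_support_sdiff_componentGraph hx)]
    exact hreg x (support_mono hK hx)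

/-- Let `H` be a `2`-regular graph (a vertex-disjoint union of cycles). Suppose that
for every cycle `C` of `H` and every edge-bijective homomorphic image `C'` of `C`
(vertex-disjoint from `C`) there is a finite `(C, C')_{C₃}`-transformer of degeneracy
at most `4` rooted at `V(C ∪ C')`, which can moreover be chosen to avoid any
prescribed finite set of vertices. Then for every graph `H'` obtained from `H` by
identifying vertices (i.e. with an edge-bijective homomorphism `H → H'`) and
vertex-disjoint from `H`, there is an `(H, H')_{C₃}`-transformer whose degeneracy
rooted at `V(H ∪ H')` is at most `4`. -/
theorem exists_transformer_of_cycle_transformers {V : Type*}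
    (H H' : SimpleGraph V)
    (hreg : ∀ v ∈ H.support, ndeg H v = 2)
    (hfin : H.support.Finite)
    (hcyc : ∀ C C' : SimpleGraph V, C ≤ H → IsCycleGraph C →
      Disjoint C.support C'.support →
      (∃ ψ : C →g C', Function.Bijective ψ.mapEdgeSet) →
      ∀ A : Set V, A.Finite →
        ∃ T : SimpleGraph V,
          IsTransformer (cycleGraph 3) C C' T ∧
          DegeneracyRootedLE T (C.support ∪ C'.support) 4 ∧
          T.support.Finite ∧
          Disjoint (T.support \ (C.support ∪ C'.support)) A)
    (hdisj : Disjoint H.support H'.support)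
    (φ : H →g H') (hφ : Function.Bijective φ.mapEdgeSet) :
    ∃ T : SimpleGraph V,
      IsTransformer (cycleGraph 3) H H' T ∧
      DegeneracyRootedLE T (H.support ∪ H'.support) 4 := by
  obtain ⟨T, hT, hdeg, -⟩ :=
    hasAvoidingTransformer_of_cycles hreg hfin hcyc hdisj φ hφ ∅ Set.finite_empty
  exact ⟨T, hT, hdeg⟩

end Paper
end
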